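/- arXiv:2004.10103 — 7 statements merged into one kernel-verified Lean document; each statement's English description precedes it below -/
import Mathlib

section
/- Let C be a proper closed convex cone in a real Banach space E, and suppose x₁, x₂ ∈ E with r₁, r₂ > 0 satisfy B(x₁, r₁) ⊆ C and B(x₂, r₂) ⊆ C. Then the Hilbert projective distance satisfies d_C(x₁, x₂) ≤ log(1 + ‖x₁ − x₂‖/r₁) + log(1 + ‖x₁ − x₂‖/r₂) ≤ (1/r₁ + 1/r₂)·‖x₁ − x₂‖. -/
/-!
Every `t > ‖x - y‖ / r` makes `t • x + (x - y)` a positive multiple of a point of `ball x r`,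
hence a point of the cone; so `δ(x, y) ≤ 1 + ‖x - y‖ / r` whenever `ball x r ⊆ C`.
Multiplying the two bounds and taking logarithms gives the first inequality, and
`log (1 + s) ≤ s` the second.
-/

open Real Metric Set

structure IsBirkhoffCone {E : Type*} [NormedAddCommGroup E] [NormedSpace ℝ E]
    (C : Set E) : Prop where
  smul_mem : ∀ t : ℝ, 0 < t → ∀ x ∈ C, t • x ∈ C
  isClosed : IsClosed C
  convex : Convex ℝ C
  proper : C ∩ (-C) = {0}

noncomputable def hilbertDelta {E : Type*} [NormedAddCommGroup E] [NormedSpace ℝ E]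
    (C : Set E) (x y : E) : ℝ :=
  sInf {t : ℝ | 0 < t ∧ t • x - y ∈ C}

noncomputable def hilbertDist {E : Type*} [NormedAddCommGroup E] [NormedSpace ℝ E]
    (C : Set E) (x y : E) : ℝ :=
  Real.log (hilbertDelta C x y * hilbertDelta C y x)

section

variable {E : Type*} [NormedAddCommGroup E] [NormedSpace ℝ E] {C : Set E}

lemma smul_add_mem_of_ball_subset (hC : ∀ t : ℝ, 0 < t → ∀ x ∈ C, t • x ∈ C)
    {x v : E} {r s : ℝ} (h : ball x r ⊆ C) (hs : 0 < s) (hv : ‖v‖ < s * r) :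
    s • x + v ∈ C := by
  have hball : x + s⁻¹ • v ∈ ball x r := by
    rw [mem_ball_iff_norm, add_sub_cancel_left, norm_smul, norm_inv, Real.norm_of_nonneg hs.le,
      inv_mul_lt_iff₀ hs]
    exact hv
  have hsv : s • (x + s⁻¹ • v) = s • x + v := by
    rw [smul_add, smul_inv_smul₀ hs.ne']
  exact hsv ▸ hC s hs _ (h hball)

lemma hilbertDelta_nonneg (x y : E) : 0 ≤ hilbertDelta C x y :=
  Real.sInf_nonneg fun _ ht => ht.1.le

lemma hilbertDelta_le_of_ball_subset (hC : ∀ t : ℝ, 0 < t → ∀ x ∈ C, t • x ∈ C)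
    {x : E} {r : ℝ} (hr : 0 < r) (h : ball x r ⊆ C) (y : E) :
    hilbertDelta C x y ≤ 1 + ‖x - y‖ / r := by
  refine le_of_forall_pos_le_add fun ε hε => csInf_le ⟨0, fun _ ht => ht.1.le⟩ ⟨by positivity, ?_⟩
  have hlt : ‖x - y‖ < (‖x - y‖ / r + ε) * r := by
    rw [add_mul, div_mul_cancel₀ _ hr.ne']
    linarith [mul_pos hε hr]
  have hsplit : (1 + ‖x - y‖ / r + ε) • x - y = (‖x - y‖ / r + ε) • x + (x - y) := by
    rw [add_assoc, add_smul, one_smul]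
    abel
  exact hsplit ▸ smul_add_mem_of_ball_subset hC h (by positivity) hlt

lemma hilbertDist_le_log_add_log {x y : E} {a b : ℝ} (ha : 1 ≤ a) (hb : 1 ≤ b)
    (hxy : hilbertDelta C x y ≤ a) (hyx : hilbertDelta C y x ≤ b) :
    hilbertDist C x y ≤ Real.log a + Real.log b := by
  rw [hilbertDist, ← Real.log_mul (by positivity) (by positivity)]
  rcases (mul_nonneg (hilbertDelta_nonneg x y) (hilbertDelta_nonneg y x)).eq_or_lt with h0 | hpos
  · rw [← h0, Real.log_zero]
    exact Real.log_nonneg (one_le_mul_of_one_le_of_one_le ha hb)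
  · exact Real.log_le_log hpos (mul_le_mul hxy hyx (hilbertDelta_nonneg y x) (by positivity))

end

lemma Real.log_one_add_le_self {s : ℝ} (hs : -1 < s) : Real.log (1 + s) ≤ s := by
  linarith [Real.log_le_sub_one_of_pos (show 0 < 1 + s by linarith)]

theorem hilbertDist_le_of_ball_subset
    {E : Type*} [NormedAddCommGroup E] [NormedSpace ℝ E]
    (C : Set E) (hC : IsBirkhoffCone C) (x₁ x₂ : E) (r₁ r₂ : ℝ)
    (hr₁ : 0 < r₁) (hr₂ : 0 < r₂)
    (h₁ : Metric.ball x₁ r₁ ⊆ C) (h₂ : Metric.ball x₂ r₂ ⊆ C) :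
    hilbertDist C x₁ x₂ ≤
        Real.log (1 + ‖x₁ - x₂‖ / r₁) + Real.log (1 + ‖x₁ - x₂‖ / r₂) ∧
      Real.log (1 + ‖x₁ - x₂‖ / r₁) + Real.log (1 + ‖x₁ - x₂‖ / r₂) ≤
        (1 / r₁ + 1 / r₂) * ‖x₁ - x₂‖ := by
  have hd₁ : 0 ≤ ‖x₁ - x₂‖ / r₁ := by positivity
  have hd₂ : 0 ≤ ‖x₁ - x₂‖ / r₂ := by positivity
  have hδ₂ := hilbertDelta_le_of_ball_subset hC.smul_mem hr₂ h₂ x₁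
  rw [norm_sub_rev] at hδ₂
  refine ⟨hilbertDist_le_log_add_log (by linarith) (by linarith)
    (hilbertDelta_le_of_ball_subset hC.smul_mem hr₁ h₁ x₂) hδ₂, ?_⟩
  calc Real.log (1 + ‖x₁ - x₂‖ / r₁) + Real.log (1 + ‖x₁ - x₂‖ / r₂)
      ≤ ‖x₁ - x₂‖ / r₁ + ‖x₁ - x₂‖ / r₂ :=
        add_le_add (Real.log_one_add_le_self (by linarith)) (Real.log_one_add_le_self (by linarith))
    _ = (1 / r₁ + 1 / r₂) * ‖x₁ - x₂‖ := by ring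
end

section
/- Let C be a regular Birkhoff cone in E with outer-regularity data (ℓ, K) and inner-regularity parameter ρ > 0. Let L ∈ L(E) be a bounded linear operator with L(C) ⊆ C. Then for every x ∈ C(ρ) \ {0}: (ρ/K)·‖L‖·‖x‖ ≤ ⟨ℓ, Lx⟩ ≤ ‖L‖·‖x‖, and moreover (ρ/K)·‖L‖ ≤ ⟨ℓ, Lx⟩/⟨ℓ, x⟩ ≤ K·‖L‖. -/
/-!
Testing the outer-regularity inequality `‖u‖ ≤ K ⟨ℓ, u⟩` on both points `L x ± L y` of the
cone, the triangle inequality gives `2 ‖L y‖ ≤ ‖L x + L y‖ + ‖L x - L y‖ ≤ 2 K ⟨ℓ, L x⟩`,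
whenever `x ± y ∈ C`. Since the whole ball of radius `ρ ‖x‖` around `x` lies in `C`, this bounds
`ρ ‖x‖ ‖L‖` by `K ⟨ℓ, L x⟩`; the remaining bounds follow from `‖x‖ / K ≤ ⟨ℓ, x⟩ ≤ ‖x‖`.
-/

open Real Metric Set

theorem ContinuousLinearMap.mul_opNorm_le_of_forall_mem_ball
    {E F : Type*} [NormedAddCommGroup E] [NormedSpace ℝ E]
    [SeminormedAddCommGroup F] [NormedSpace ℝ F]
    (f : E →L[ℝ] F) {r M : ℝ} (hr : 0 < r) (hf : ∀ y ∈ ball (0 : E) r, ‖f y‖ ≤ M) :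
    r * ‖f‖ ≤ M := by
  by_contra! hlt
  obtain ⟨y, hy, hMy⟩ := f.exists_lt_apply_of_lt_opNorm ((div_lt_iff₀' hr).2 hlt)
  have hry : r • y ∈ ball (0 : E) r := by
    rw [mem_ball_zero_iff, norm_smul, Real.norm_of_nonneg hr.le]
    exact mul_lt_of_lt_one_right hr hy
  have := hf _ hry
  rw [map_smul, norm_smul, Real.norm_of_nonneg hr.le] at this
  exact this.not_gt ((div_lt_iff₀' hr).1 hMy)

section OuterRegular

variable {E : Type*} [NormedAddCommGroup E] [NormedSpace ℝ E]
  {C : Set E} {ℓ : E →L[ℝ] ℝ} {K : ℝ}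

theorem norm_le_mul_of_add_mem_of_sub_mem (hK : 0 < K) (houter : ∀ u ∈ C, ‖u‖ / K ≤ ℓ u)
    {v w : E} (hadd : v + w ∈ C) (hsub : v - w ∈ C) : ‖w‖ ≤ K * ℓ v := by
  have h₁ := (div_le_iff₀ hK).1 (houter _ hadd)
  have h₂ := (div_le_iff₀ hK).1 (houter _ hsub)
  rw [map_add] at h₁
  rw [map_sub] at h₂
  have htri : 2 * ‖w‖ ≤ ‖v + w‖ + ‖v - w‖ :=
    calc 2 * ‖w‖ = ‖(v + w) - (v - w)‖ := by
          rw [show (v + w) - (v - w) = (2 : ℝ) • w by module, norm_smul]; norm_num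
      _ ≤ ‖v + w‖ + ‖v - w‖ := norm_sub_le _ _
  linarith

theorem mul_opNorm_le_of_ball_subset (hK : 0 < K) (houter : ∀ u ∈ C, ‖u‖ / K ≤ ℓ u)
    {L : E →L[ℝ] E} (hL : ∀ x ∈ C, L x ∈ C) {x : E} {r : ℝ} (hr : 0 < r)
    (hball : ball x r ⊆ C) : r * ‖L‖ ≤ K * ℓ (L x) := by
  refine L.mul_opNorm_le_of_forall_mem_ball hr fun y hy => ?_
  rw [mem_ball_zero_iff] at hy
  have hadd : x + y ∈ C := hball (add_mem_ball_iff_norm.2 hy)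
  have hsub : x - y ∈ C := hball (by rwa [sub_eq_add_neg, add_mem_ball_iff_norm, norm_neg])
  exact norm_le_mul_of_add_mem_of_sub_mem hK houter
    (by simpa only [map_add] using hL _ hadd) (by simpa only [map_sub] using hL _ hsub)

end OuterRegular

theorem upper_lower_bounds_cone_operator_general
    {E : Type*} [NormedAddCommGroup E] [NormedSpace ℝ E]
    (C : Set E)
    (ℓ : E →L[ℝ] ℝ) (K ρ : ℝ) (hℓ : ‖ℓ‖ = 1) (hK : 1 ≤ K)
    (houter : ∀ u ∈ C, ‖u‖ / K ≤ ℓ u) (hρ0 : 0 < ρ)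
    (L : E →L[ℝ] E) (hL : ∀ x ∈ C, L x ∈ C)
    (x : E) (hx : x ∈ C) (hx0 : x ≠ 0)
    (hxρ : Metric.ball x (ρ * ‖x‖) ⊆ C) :
    (ρ / K * ‖L‖ * ‖x‖ ≤ ℓ (L x) ∧ ℓ (L x) ≤ ‖L‖ * ‖x‖) ∧
    (ρ / K * ‖L‖ ≤ ℓ (L x) / ℓ x ∧ ℓ (L x) / ℓ x ≤ K * ‖L‖) := by
  have hK0 : 0 < K := one_pos.trans_le hK
  have hxn : 0 < ‖x‖ := norm_pos_iff.2 hx0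
  have hℓ_le (u : E) : ℓ u ≤ ‖u‖ := by
    simpa [hℓ] using (le_abs_self (ℓ u)).trans (ℓ.le_opNorm u)
  have hkey := mul_opNorm_le_of_ball_subset hK0 houter hL (mul_pos hρ0 hxn) hxρ
  have hlow : ρ / K * ‖L‖ * ‖x‖ ≤ ℓ (L x) := by
    rw [div_mul_eq_mul_div, div_mul_eq_mul_div, div_le_iff₀ hK0]
    linarith
  have hup : ℓ (L x) ≤ ‖L‖ * ‖x‖ := (hℓ_le _).trans (L.le_opNorm x)
  have hℓx : ‖x‖ ≤ K * ℓ x := (div_le_iff₀' hK0).1 (houter x hx)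
  have hℓx0 : 0 < ℓ x := pos_of_mul_pos_right (hxn.trans_le hℓx) hK0.le
  have hcoef : 0 ≤ ρ / K * ‖L‖ := by positivity
  refine ⟨⟨hlow, hup⟩, (le_div_iff₀ hℓx0).2 ?_, (div_le_iff₀ hℓx0).2 ?_⟩
  · nlinarith [mul_le_mul_of_nonneg_left (hℓ_le x) hcoef]
  · nlinarith [mul_le_mul_of_nonneg_left hℓx (norm_nonneg L)]

/-- Lemma `lemma:upperlower`: upper and lower bounds for ⟨ℓ, Lx⟩ on C(ρ). -/
theorem upper_lower_bounds_cone_operator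
    {E : Type*} [NormedAddCommGroup E] [NormedSpace ℝ E]
    (C : Set E) (hC : IsBirkhoffCone C)
    (ℓ : E →L[ℝ] ℝ) (K ρ : ℝ) (hℓ : ‖ℓ‖ = 1) (hK : 1 ≤ K)
    (houter : ∀ u ∈ C, ‖u‖ / K ≤ ℓ u) (hρ0 : 0 < ρ) (hρ1 : ρ ≤ 1)
    (L : E →L[ℝ] E) (hL : ∀ x ∈ C, L x ∈ C)
    (x : E) (hx : x ∈ C) (hx0 : x ≠ 0)
    (hxρ : Metric.ball x (ρ * ‖x‖) ⊆ C) :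
    (ρ / K * ‖L‖ * ‖x‖ ≤ ℓ (L x) ∧ ℓ (L x) ≤ ‖L‖ * ‖x‖) ∧
    (ρ / K * ‖L‖ ≤ ℓ (L x) / ℓ x ∧ ℓ (L x) / ℓ x ≤ K * ‖L‖) :=
  upper_lower_bounds_cone_operator_general C ℓ K ρ hℓ hK houter hρ0 L hL x hx hx0 hxρ
end

section
/- Let W ⊆ X be an open convex set in a Banach space, d₁ the norm metric on W, and d₂ another metric that is L-equivalent to d₁ (i.e., (1/L)d₁ ≤ d₂ ≤ L·d₁) for some L ≥ 1. Let δ₁, δ₂ > 0 be K-equivalent constants (K ≥ 1). Then a function φ : W → Z (Z Banach) is (α; δ₁, d₁)-Hölder if and only if it is (α; δ₂, d₂)-Hölder, and the corresponding local Hölder constants h^α_{δ₁,d₁}(φ) and h^α_{δ₂,d₂}(φ) are equivalent up to the factor ⌈LK⌉^{1−α}·L^α. -/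
open Real Metric Set

/-! Subdividing the segment from `ξ` to `ξ'` into `N` steps of length `‖ξ - ξ'‖ / N` turns a
Hölder bound at scale `δ` into one at scale `N δ`, at the cost of the factor `N ^ (1 - α)`;
with `N = ⌈L K⌉` this compensates both the change of scale and the shrinking of scale by `L`
that comes with replacing one metric by an `L`-equivalent one (which itself costs `L ^ α`). -/

/-- `φ` is δ-locally α-Hölder with constant `c` on `W` w.r.t. the distance `d`. -/
def IsLocHolder {X Z : Type*} [NormedAddCommGroup Z]
    (W : Set X) (d : X → X → ℝ) (δ α c : ℝ) (φ : X → Z) : Prop :=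
  ∀ ξ ∈ W, ∀ ξ' ∈ W, d ξ ξ' ≤ δ → ‖φ ξ - φ ξ'‖ ≤ c * d ξ ξ' ^ α

theorem Convex.dist_le_mul_of_forall_dist_eq {X Z : Type*} [NormedAddCommGroup X]
    [NormedSpace ℝ X] [PseudoMetricSpace Z] {W : Set X} (hW : Convex ℝ W) (φ : X → Z)
    {x y : X} (hx : x ∈ W) (hy : y ∈ W) {N : ℕ} (hN : 0 < N) {B : ℝ}
    (hstep : ∀ a ∈ W, ∀ b ∈ W, dist a b = dist x y / N → dist (φ a) (φ b) ≤ B) :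
    dist (φ x) (φ y) ≤ N * B := by
  have hN' : (0 : ℝ) < N := by exact_mod_cast hN
  set z : ℕ → X := fun i => AffineMap.lineMap x y ((i : ℝ) / N)
  have hz_mem : ∀ i ≤ N, z i ∈ W := fun i hi =>
    hW.lineMap_mem hx hy ⟨by positivity, div_le_one_of_le₀ (by exact_mod_cast hi) hN'.le⟩
  have hz_step : ∀ i, dist (z i) (z (i + 1)) = dist x y / N := by
    intro i
    rw [dist_lineMap_lineMap, Real.dist_eq, Nat.cast_succ, ← sub_div, sub_add_cancel_left,
      abs_div, abs_neg, abs_one, abs_of_pos hN', one_div_mul_eq_div]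
  calc dist (φ x) (φ y) = dist (φ (z 0)) (φ (z N)) := by simp [z, hN'.ne']
    _ ≤ ∑ i ∈ Finset.range N, dist (φ (z i)) (φ (z (i + 1))) :=
      dist_le_range_sum_dist (φ ∘ z) N
    _ ≤ ∑ _i ∈ Finset.range N, B := Finset.sum_le_sum fun i hi =>
      hstep _ (hz_mem i (Finset.mem_range.1 hi).le) _ (hz_mem (i + 1) (Finset.mem_range.1 hi))
        (hz_step i)
    _ = N * B := by simp

namespace IsLocHolder

variable {X Z : Type*} [NormedAddCommGroup Z] {W : Set X} {φ : X → Z} {α c : ℝ}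

theorem mono_scale {d : X → X → ℝ} {δ δ' : ℝ} (h : IsLocHolder W d δ α c φ) (hδ : δ' ≤ δ) :
    IsLocHolder W d δ' α c φ :=
  fun ξ hξ ξ' hξ' hd => h ξ hξ ξ' hξ' (hd.trans hδ)

theorem of_le_mul {d e : X → X → ℝ} {L ρ : ℝ} (h : IsLocHolder W d ρ α c φ) (hL : 0 < L)
    (hα : 0 ≤ α) (hc : 0 ≤ c) (hd : ∀ ξ ∈ W, ∀ ξ' ∈ W, 0 ≤ d ξ ξ')
    (hde : ∀ ξ ∈ W, ∀ ξ' ∈ W, d ξ ξ' ≤ L * e ξ ξ') :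
    IsLocHolder W e (ρ / L) α (L ^ α * c) φ := by
  intro ξ hξ ξ' hξ' he
  have he0 : 0 ≤ e ξ ξ' := nonneg_of_mul_nonneg_right ((hd ξ hξ ξ' hξ').trans (hde ξ hξ ξ' hξ')) hL
  have hdρ : d ξ ξ' ≤ ρ := (hde ξ hξ ξ' hξ').trans ((le_div_iff₀' hL).1 he)
  calc ‖φ ξ - φ ξ'‖ ≤ c * d ξ ξ' ^ α := h ξ hξ ξ' hξ' hdρ
    _ ≤ c * (L * e ξ ξ') ^ α := by gcongr; exacts [hd ξ hξ ξ' hξ', hde ξ hξ ξ' hξ']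
    _ = L ^ α * c * e ξ ξ' ^ α := by rw [mul_rpow hL.le he0]; ring

theorem nat_mul_scale [NormedAddCommGroup X] [NormedSpace ℝ X] (hW : Convex ℝ W) {ρ : ℝ}
    (h : IsLocHolder W (fun ξ ξ' => ‖ξ - ξ'‖) ρ α c φ) {N : ℕ} (hN : 0 < N) :
    IsLocHolder W (fun ξ ξ' => ‖ξ - ξ'‖) (N * ρ) α ((N : ℝ) ^ (1 - α) * c) φ := by
  intro ξ hξ ξ' hξ' hξξ'
  have hN' : (0 : ℝ) < N := by exact_mod_cast hN
  have hchain := hW.dist_le_mul_of_forall_dist_eq φ hξ hξ' hN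
    (B := c * (‖ξ - ξ'‖ / N) ^ α) fun a ha b hb hab => by
      simp only [dist_eq_norm] at hab ⊢
      rw [← hab]
      exact h a ha b hb (hab.trans_le ((div_le_iff₀' hN').2 hξξ'))
  rw [dist_eq_norm] at hchain
  calc ‖φ ξ - φ ξ'‖ ≤ N * (c * (‖ξ - ξ'‖ / N) ^ α) := hchain
    _ = (N : ℝ) ^ (1 - α) * c * ‖ξ - ξ'‖ ^ α := by
      rw [div_rpow (norm_nonneg _) hN'.le, rpow_sub hN', rpow_one]
      field_simp

end IsLocHolder

theorem locHolder_equiv_metrics_general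
    {X Z : Type*} [NormedAddCommGroup X] [NormedSpace ℝ X] [NormedAddCommGroup Z]
    (W : Set X) (hWconv : Convex ℝ W)
    (d₂ : X → X → ℝ) (L K : ℝ) (hL : 1 ≤ L) (hK : 1 ≤ K)
    (hequiv : ∀ ξ ∈ W, ∀ ξ' ∈ W, ‖ξ - ξ'‖ / L ≤ d₂ ξ ξ' ∧ d₂ ξ ξ' ≤ L * ‖ξ - ξ'‖)
    (δ₁ δ₂ : ℝ) (hδ₁ : 0 < δ₁) (hδ₂ : 0 < δ₂)
    (hδe : δ₁ / K ≤ δ₂ ∧ δ₂ ≤ K * δ₁)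
    (α : ℝ) (hα0 : 0 < α)
    (φ : X → Z) :
    ((∃ c : ℝ, 0 ≤ c ∧ IsLocHolder W (fun ξ ξ' => ‖ξ - ξ'‖) δ₁ α c φ) ↔
      (∃ c : ℝ, 0 ≤ c ∧ IsLocHolder W d₂ δ₂ α c φ)) ∧
    (∀ c : ℝ, 0 ≤ c → IsLocHolder W (fun ξ ξ' => ‖ξ - ξ'‖) δ₁ α c φ →
      IsLocHolder W d₂ δ₂ α ((⌈L * K⌉₊ : ℝ) ^ (1 - α) * L ^ α * c) φ) ∧
    (∀ c : ℝ, 0 ≤ c → IsLocHolder W d₂ δ₂ α c φ →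
      IsLocHolder W (fun ξ ξ' => ‖ξ - ξ'‖) δ₁ α ((⌈L * K⌉₊ : ℝ) ^ (1 - α) * L ^ α * c) φ) := by
  have hL0 : 0 < L := one_pos.trans_le hL
  have hK0 : 0 < K := one_pos.trans_le hK
  set N := ⌈L * K⌉₊
  have hN : 0 < N := Nat.ceil_pos.2 (by positivity)
  have hscale : ∀ δ, 0 ≤ δ → K * δ ≤ N * δ / L := fun δ hδ => by
    rw [le_div_iff₀ hL0]
    nlinarith [Nat.le_ceil (L * K)]
  have hd₂0 : ∀ ξ ∈ W, ∀ ξ' ∈ W, 0 ≤ d₂ ξ ξ' := fun ξ hξ ξ' hξ' =>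
    (div_nonneg (norm_nonneg _) hL0.le).trans (hequiv ξ hξ ξ' hξ').1
  have hnorm_le : ∀ ξ ∈ W, ∀ ξ' ∈ W, ‖ξ - ξ'‖ ≤ L * d₂ ξ ξ' := fun ξ hξ ξ' hξ' =>
    (div_le_iff₀' hL0).1 (hequiv ξ hξ ξ' hξ').1
  have hd₂_le : ∀ ξ ∈ W, ∀ ξ' ∈ W, d₂ ξ ξ' ≤ L * ‖ξ - ξ'‖ := fun ξ hξ ξ' hξ' =>
    (hequiv ξ hξ ξ' hξ').2
  have fwd : ∀ c, 0 ≤ c → IsLocHolder W (fun ξ ξ' => ‖ξ - ξ'‖) δ₁ α c φ →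
      IsLocHolder W d₂ δ₂ α ((N : ℝ) ^ (1 - α) * L ^ α * c) φ := fun c hc h => by
    have h_wide := h.nat_mul_scale hWconv hN
    have h_d₂ := h_wide.of_le_mul hL0 hα0.le (by positivity) (fun _ _ _ _ => norm_nonneg _) hnorm_le
    rw [mul_assoc, mul_left_comm]
    exact h_d₂.mono_scale (hδe.2.trans (hscale δ₁ hδ₁.le))
  have bwd : ∀ c, 0 ≤ c → IsLocHolder W d₂ δ₂ α c φ →
      IsLocHolder W (fun ξ ξ' => ‖ξ - ξ'‖) δ₁ α ((N : ℝ) ^ (1 - α) * L ^ α * c) φ :=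
    fun c hc h => by
    have h_norm := h.of_le_mul hL0 hα0.le hc hd₂0 hd₂_le
    have h_wide := h_norm.nat_mul_scale hWconv hN
    rw [mul_div_assoc'] at h_wide
    rw [mul_assoc]
    exact h_wide.mono_scale (((div_le_iff₀' hK0).1 hδe.1).trans (hscale δ₂ hδ₂.le))
  exact ⟨⟨fun ⟨c, hc, h⟩ => ⟨_, by positivity, fwd c hc h⟩,
    fun ⟨c, hc, h⟩ => ⟨_, by positivity, bwd c hc h⟩⟩, fwd, bwd⟩

/-- Lemma `holdereq`: local Hölder classes, and the corresponding Hölder constants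
up to the factor ⌈LK⌉^{1-α}·L^α, are unchanged when replacing the norm metric by an
L-equivalent metric and the locality scale by a K-equivalent one. -/
theorem locHolder_equiv_metrics
    {X Z : Type*} [NormedAddCommGroup X] [NormedSpace ℝ X] [NormedAddCommGroup Z]
    (W : Set X) (hWopen : IsOpen W) (hWconv : Convex ℝ W)
    (d₂ : X → X → ℝ) (L K : ℝ) (hL : 1 ≤ L) (hK : 1 ≤ K)
    (hequiv : ∀ ξ ∈ W, ∀ ξ' ∈ W, ‖ξ - ξ'‖ / L ≤ d₂ ξ ξ' ∧ d₂ ξ ξ' ≤ L * ‖ξ - ξ'‖)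
    (δ₁ δ₂ : ℝ) (hδ₁ : 0 < δ₁) (hδ₂ : 0 < δ₂)
    (hδe : δ₁ / K ≤ δ₂ ∧ δ₂ ≤ K * δ₁)
    (α : ℝ) (hα0 : 0 < α) (hα1 : α ≤ 1)
    (φ : X → Z) :
    ((∃ c : ℝ, 0 ≤ c ∧ IsLocHolder W (fun ξ ξ' => ‖ξ - ξ'‖) δ₁ α c φ) ↔
      (∃ c : ℝ, 0 ≤ c ∧ IsLocHolder W d₂ δ₂ α c φ)) ∧
    (∀ c : ℝ, 0 ≤ c → IsLocHolder W (fun ξ ξ' => ‖ξ - ξ'‖) δ₁ α c φ →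
      IsLocHolder W d₂ δ₂ α ((⌈L * K⌉₊ : ℝ) ^ (1 - α) * L ^ α * c) φ) ∧
    (∀ c : ℝ, 0 ≤ c → IsLocHolder W d₂ δ₂ α c φ →
      IsLocHolder W (fun ξ ξ' => ‖ξ - ξ'‖) δ₁ α ((⌈L * K⌉₊ : ℝ) ^ (1 - α) * L ^ α * c) φ) :=
  locHolder_equiv_metrics_general W hWconv d₂ L K hL hK hequiv δ₁ δ₂ hδ₁ hδ₂ hδe α hα0 φ
end

section
/- Let U be an open convex subset of a Banach space B_U, let Z be a Banach space, and let 0 ≤ s < r ≤ 1. If φ : U × V → Z is r-Hölder (locally, at scale δ₁ ∈ (0,1], with respect to the max norm on the product), then for each u ∈ U the partial map φ_u := φ(u, ·) : V → Z is s-Hölder, and the map u ↦ φ_u is (r−s)-Hölder from U to the Banach space of bounded s-Hölder functions on V; moreover its Hölder norm is bounded by 2‖φ‖_r. -/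
/-!
Restricting `φ` to a slice `{u} × V` or `U × {x}` is isometric for the max norm, so both partial
maps are r-Hölder, and on distances at most `δ₁ ≤ 1` an r-Hölder bound implies every weaker
exponent. For the mixed difference `Δ = φ(u,x) - φ(u',x) - φ(u,x') + φ(u',x')`, grouping the terms
in the two possible ways gives `‖Δ‖ ≤ 2N a^r` and `‖Δ‖ ≤ 2N b^r` with `a = ‖u - u'‖`,
`b = ‖x - x'‖`, and `min a b ^ r ≤ a ^ (r - s) * b ^ s`.
-/

open Real Metric Set

theorem Real.min_rpow_le_rpow_sub_mul_rpow {a b r s : ℝ} (ha : 0 ≤ a) (hb : 0 ≤ b)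
    (hs : 0 ≤ s) (hsr : s ≤ r) : min a b ^ r ≤ a ^ (r - s) * b ^ s := by
  have hmin : 0 ≤ min a b := le_min ha hb
  calc min a b ^ r = min a b ^ (r - s) * min a b ^ s := by
        rw [← rpow_add_of_nonneg hmin (sub_nonneg.2 hsr) hs, sub_add_cancel]
    _ ≤ a ^ (r - s) * b ^ s := by
        gcongr
        exacts [min_le_left a b, min_le_right a b]

def LocallyHolderOn {X Y : Type*} [PseudoMetricSpace X] [PseudoMetricSpace Y]
    (δ C r : ℝ) (f : X → Y) (s : Set X) : Prop :=
  ∀ p ∈ s, ∀ q ∈ s, dist p q ≤ δ → dist (f p) (f q) ≤ C * dist p q ^ r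

namespace LocallyHolderOn

variable {X Y Z : Type*} [PseudoMetricSpace X] [PseudoMetricSpace Y] {δ C r : ℝ}

theorem mono_const {f : X → Y} {s : Set X} (hf : LocallyHolderOn δ C r f s) {C' : ℝ}
    (hC : C ≤ C') : LocallyHolderOn δ C' r f s := fun p hp q hq hpq =>
  (hf p hp q hq hpq).trans (by gcongr)

theorem mono_exponent {f : X → Y} {s : Set X} (hf : LocallyHolderOn δ C r f s) (hδ : δ ≤ 1)
    (hC : 0 ≤ C) {e : ℝ} (he : 0 ≤ e) (her : e ≤ r) : LocallyHolderOn δ C e f s :=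
  fun p hp q hq hpq => (hf p hp q hq hpq).trans <| mul_le_mul_of_nonneg_left
    (rpow_le_rpow_of_exponent_ge' dist_nonneg (hpq.trans hδ) he her) hC

section Prod

variable [PseudoMetricSpace Z] {f : X × Y → Z} {s : Set X} {t : Set Y}

theorem comp_prodMk_right (hf : LocallyHolderOn δ C r f (s ×ˢ t)) {x : X} (hx : x ∈ s) :
    LocallyHolderOn δ C r (fun y => f (x, y)) t := fun y hy y' hy' hyy' => by
  simpa using hf (x, y) ⟨hx, hy⟩ (x, y') ⟨hx, hy'⟩ (by simpa using hyy')

theorem comp_prodMk_left (hf : LocallyHolderOn δ C r f (s ×ˢ t)) {y : Y} (hy : y ∈ t) :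
    LocallyHolderOn δ C r (fun x => f (x, y)) s := fun x hx x' hx' hxx' => by
  simpa using hf (x, y) ⟨hx, hy⟩ (x', y) ⟨hx', hy⟩ (by simpa using hxx')

end Prod

theorem norm_sub_sub_sub_le {E : Type*} [SeminormedAddCommGroup E] {f : X × Y → E}
    {s : Set X} {t : Set Y} (hf : LocallyHolderOn δ C r f (s ×ˢ t)) (hC : 0 ≤ C)
    {e : ℝ} (he : 0 ≤ e) (her : e ≤ r) {x x' : X} (hx : x ∈ s) (hx' : x' ∈ s)
    (hxx' : dist x x' ≤ δ) {y y' : Y} (hy : y ∈ t) (hy' : y' ∈ t) (hyy' : dist y y' ≤ δ) :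
    ‖f (x, y) - f (x', y) - (f (x, y') - f (x', y'))‖ ≤
      2 * C * dist x x' ^ (r - e) * dist y y' ^ e := by
  have bound_fst : ‖f (x, y) - f (x', y) - (f (x, y') - f (x', y'))‖ ≤ 2 * C * dist x x' ^ r := by
    have h := hf.comp_prodMk_left hy x hx x' hx' hxx'
    have h' := hf.comp_prodMk_left hy' x hx x' hx' hxx'
    rw [dist_eq_norm] at h h'
    linarith [norm_sub_le (f (x, y) - f (x', y)) (f (x, y') - f (x', y'))]
  have bound_snd : ‖f (x, y) - f (x', y) - (f (x, y') - f (x', y'))‖ ≤ 2 * C * dist y y' ^ r := by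
    have h := hf.comp_prodMk_right hx y hy y' hy' hyy'
    have h' := hf.comp_prodMk_right hx' y hy y' hy' hyy'
    rw [dist_eq_norm] at h h'
    rw [sub_sub_sub_comm]
    linarith [norm_sub_le (f (x, y) - f (x, y')) (f (x', y) - f (x', y'))]
  calc ‖f (x, y) - f (x', y) - (f (x, y') - f (x', y'))‖
      ≤ 2 * C * min (dist x x') (dist y y') ^ r := by
        rcases min_choice (dist x x') (dist y y') with h | h <;> rw [h] <;> assumption
    _ ≤ 2 * C * (dist x x' ^ (r - e) * dist y y' ^ e) := by
        gcongr
        exact min_rpow_le_rpow_sub_mul_rpow dist_nonneg dist_nonneg he her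
    _ = 2 * C * dist x x' ^ (r - e) * dist y y' ^ e := by ring

end LocallyHolderOn

theorem parameter_extraction_holder_general
    {BU BV Z : Type*} [NormedAddCommGroup BU] [NormedSpace ℝ BU]
    [NormedAddCommGroup BV] [NormedSpace ℝ BV] [NormedAddCommGroup Z]
    (U : Set BU) (V : Set BV)
    (s r δ₁ N : ℝ) (hs : 0 ≤ s) (hsr : s < r)
    (hδ1 : δ₁ ≤ 1) (hN : 0 ≤ N)
    (φ : BU × BV → Z)
    (hhold : ∀ p ∈ U ×ˢ V, ∀ q ∈ U ×ˢ V, ‖p - q‖ ≤ δ₁ → ‖φ p - φ q‖ ≤ N * ‖p - q‖ ^ r) :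
    (∀ u ∈ U, ∀ x ∈ V, ∀ x' ∈ V, ‖x - x'‖ ≤ δ₁ →
        ‖φ (u, x) - φ (u, x')‖ ≤ N * ‖x - x'‖ ^ s) ∧
    (∀ u ∈ U, ∀ u' ∈ U, ‖u - u'‖ ≤ δ₁ →
      (∀ x ∈ V, ‖φ (u, x) - φ (u', x)‖ ≤ 2 * N * ‖u - u'‖ ^ (r - s)) ∧
      (∀ x ∈ V, ∀ x' ∈ V, ‖x - x'‖ ≤ δ₁ →
        ‖(φ (u, x) - φ (u', x)) - (φ (u, x') - φ (u', x'))‖ ≤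
          2 * N * ‖u - u'‖ ^ (r - s) * ‖x - x'‖ ^ s)) := by
  have hφ : LocallyHolderOn δ₁ N r φ (U ×ˢ V) := by
    simpa only [LocallyHolderOn, dist_eq_norm] using hhold
  refine ⟨fun u hu x hx x' hx' hxx' => ?_, fun u hu u' hu' huu' =>
    ⟨fun x hx => ?_, fun x hx x' hx' hxx' => ?_⟩⟩
  · have h := (hφ.comp_prodMk_right hu).mono_exponent hδ1 hN hs hsr.le
    simpa only [dist_eq_norm] using h x hx x' hx' (by rwa [dist_eq_norm])
  · have h := ((hφ.comp_prodMk_left hx).mono_exponent hδ1 hN (sub_nonneg.2 hsr.le)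
      (sub_le_self r hs)).mono_const (C' := 2 * N) (by linarith)
    simpa only [dist_eq_norm] using h u hu u' hu' (by rwa [dist_eq_norm])
  · simpa only [dist_eq_norm] using hφ.norm_sub_sub_sub_le hN hs hsr.le hu hu'
      (by rwa [dist_eq_norm]) hx hx' (by rwa [dist_eq_norm])

/-- Parameter extraction, Hölder case (Case 1 of Theorem `lemma:injection`):
if `φ` is locally r-Hölder on `U × V` (max norm, scale `δ₁ ∈ (0,1]`, with
`0 ≤ s < r ≤ 1`), then each partial map `φ(u,·)` is s-Hölder with the same
constant, and `u ↦ φ(u,·)` is (r-s)-Hölder into the bounded s-Hölder functions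
on `V`, with norm at most `2‖φ‖_r`. -/
theorem parameter_extraction_holder
    {BU BV Z : Type*} [NormedAddCommGroup BU] [NormedSpace ℝ BU]
    [NormedAddCommGroup BV] [NormedSpace ℝ BV] [NormedAddCommGroup Z]
    (U : Set BU) (V : Set BV)
    (hUopen : IsOpen U) (hUconv : Convex ℝ U)
    (hVopen : IsOpen V) (hVconv : Convex ℝ V)
    (s r δ₁ N : ℝ) (hs : 0 ≤ s) (hsr : s < r) (hr : r ≤ 1)
    (hδ0 : 0 < δ₁) (hδ1 : δ₁ ≤ 1) (hN : 0 ≤ N)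
    (φ : BU × BV → Z)
    (hbound : ∀ p ∈ U ×ˢ V, ‖φ p‖ ≤ N)
    (hhold : ∀ p ∈ U ×ˢ V, ∀ q ∈ U ×ˢ V, ‖p - q‖ ≤ δ₁ → ‖φ p - φ q‖ ≤ N * ‖p - q‖ ^ r) :
    (∀ u ∈ U, ∀ x ∈ V, ∀ x' ∈ V, ‖x - x'‖ ≤ δ₁ →
        ‖φ (u, x) - φ (u, x')‖ ≤ N * ‖x - x'‖ ^ s) ∧
    (∀ u ∈ U, ∀ u' ∈ U, ‖u - u'‖ ≤ δ₁ →
      (∀ x ∈ V, ‖φ (u, x) - φ (u', x)‖ ≤ 2 * N * ‖u - u'‖ ^ (r - s)) ∧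
      (∀ x ∈ V, ∀ x' ∈ V, ‖x - x'‖ ≤ δ₁ →
        ‖(φ (u, x) - φ (u', x)) - (φ (u, x') - φ (u', x'))‖ ≤
          2 * N * ‖u - u'‖ ^ (r - s) * ‖x - x'‖ ^ s)) :=
  parameter_extraction_holder_general U V s r δ₁ N hs hsr hδ1 hN φ hhold
end

section
/- Let U, V be open convex subsets of Banach spaces, Z a Banach space, 0 ≤ s ≤ 1 < r ≤ 1 + s. If φ : U × V → Z is C^{(1, r−1)} (differentiable with (r−1)-Hölder derivative, uniformly bounded, with max norm on the product), then for each u ∈ U the map φ_u = φ(u,·) lies in the s-Hölder space C^{(0,s)}(V;Z), and u ↦ φ_u is (r−s)-Hölder from U into C^{(0,s)}(V;Z) with Hölder constant at most ‖φ‖_r. In particular, for Δ(x) := φ(u₁,x) − φ(u₀,x) one has h^s(Δ) ≤ h^{r−1}_{δ₁}(Dφ)·|u₁ − u₀|^{r−s}. -/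
/-
Both claims are mean value estimates. A partial map `φ(u, ·)` or `φ(·, x)` has derivative
bounded by `M`, hence is `M`-Lipschitz, and on the `δ₁`-scale (`δ₁ ≤ 1`) a Lipschitz bound
dominates any Hölder bound of exponent at most one. For the mixed difference
`φ(u₁,x) - φ(u₀,x) - (φ(u₁,x') - φ(u₀,x'))`, with `a = ‖x - x'‖` and `b = ‖u₁ - u₀‖`, the mean
value theorem in `x` and the Hölder continuity of `Dφ` in `u` give the bound `H b^(r-1) a`; the
same argument with the roles exchanged gives `H a^(r-1) b`. The smaller of the two is at most
`H b^(r-s) a^s` because `s ≤ 1` and `r - s ≤ 1`.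
-/

open ContinuousLinearMap

theorem Real.rpow_sub_one_mul_le_rpow_mul_rpow {a b r t : ℝ} (ha : 0 ≤ a) (hab : a ≤ b)
    (ht : t ≤ 1) : b ^ (r - 1) * a ≤ b ^ (r - t) * a ^ t := by
  rcases ha.eq_or_lt with rfl | ha_pos
  · simp only [mul_zero]
    positivity
  have hb_pos : 0 < b := ha_pos.trans_le hab
  calc b ^ (r - 1) * a = b ^ (r - 1) * (a ^ (1 - t) * a ^ t) := by
        rw [← Real.rpow_add ha_pos, sub_add_cancel, Real.rpow_one]
    _ ≤ b ^ (r - 1) * (b ^ (1 - t) * a ^ t) := by gcongr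
    _ = b ^ (r - t) * a ^ t := by
        rw [← mul_assoc, ← Real.rpow_add hb_pos]
        ring_nf

theorem Real.min_rpow_sub_one_mul_le {a b r s : ℝ} (ha : 0 ≤ a) (hb : 0 ≤ b) (hs : s ≤ 1)
    (hrs : r ≤ 1 + s) : min (b ^ (r - 1) * a) (a ^ (r - 1) * b) ≤ b ^ (r - s) * a ^ s := by
  rcases le_total a b with hab | hba
  · exact min_le_of_left_le (Real.rpow_sub_one_mul_le_rpow_mul_rpow ha hab hs)
  · refine min_le_of_right_le ?_
    calc a ^ (r - 1) * b ≤ a ^ (r - (r - s)) * b ^ (r - s) :=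
          Real.rpow_sub_one_mul_le_rpow_mul_rpow hb hba (by linarith)
      _ = b ^ (r - s) * a ^ s := by rw [sub_sub_cancel, mul_comm]

section PartialMeanValue

variable {E F G : Type*} [NormedAddCommGroup E] [NormedSpace ℝ E] [NormedAddCommGroup F]
  [NormedSpace ℝ F] [NormedAddCommGroup G] [NormedSpace ℝ G]
  {f : E × F → G} {f' : E × F → (E × F) →L[ℝ] G} {s : Set E} {t : Set F} {C : ℝ}

theorem ContinuousLinearMap.norm_comp_inl_le (L : (E × F) →L[ℝ] G) :
    ‖L.comp (inl ℝ E F)‖ ≤ ‖L‖ :=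
  (L.opNorm_comp_le _).trans (mul_le_of_le_one_right (norm_nonneg L) (norm_inl_le_one ℝ E F))

theorem ContinuousLinearMap.norm_comp_inr_le (L : (E × F) →L[ℝ] G) :
    ‖L.comp (inr ℝ E F)‖ ≤ ‖L‖ :=
  (L.opNorm_comp_le _).trans (mul_le_of_le_one_right (norm_nonneg L) (norm_inr_le_one ℝ E F))

theorem Convex.norm_sub_le_of_hasFDerivAt_prod_left (hs : Convex ℝ s) {x : F}
    (hf : ∀ v ∈ s, HasFDerivAt f (f' (v, x)) (v, x)) (hC : ∀ v ∈ s, ‖f' (v, x)‖ ≤ C)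
    {u₀ u₁ : E} (hu₀ : u₀ ∈ s) (hu₁ : u₁ ∈ s) :
    ‖f (u₁, x) - f (u₀, x)‖ ≤ C * ‖u₁ - u₀‖ :=
  hs.norm_image_sub_le_of_norm_hasFDerivWithin_le (f := fun v => f (v, x))
    (f' := fun v => (f' (v, x)).comp (inl ℝ E F))
    (fun v hv => ((hf v hv).comp v (hasFDerivAt_prodMk_left v x)).hasFDerivWithinAt)
    (fun v hv => (norm_comp_inl_le _).trans (hC v hv)) hu₀ hu₁

theorem Convex.norm_sub_le_of_hasFDerivAt_prod_right (ht : Convex ℝ t) {u : E}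
    (hf : ∀ y ∈ t, HasFDerivAt f (f' (u, y)) (u, y)) (hC : ∀ y ∈ t, ‖f' (u, y)‖ ≤ C)
    {x x' : F} (hx : x ∈ t) (hx' : x' ∈ t) :
    ‖f (u, x) - f (u, x')‖ ≤ C * ‖x - x'‖ :=
  ht.norm_image_sub_le_of_norm_hasFDerivWithin_le (f := fun y => f (u, y))
    (f' := fun y => (f' (u, y)).comp (inr ℝ E F))
    (fun y hy => ((hf y hy).comp y (hasFDerivAt_prodMk_right u y)).hasFDerivWithinAt)
    (fun y hy => (norm_comp_inr_le _).trans (hC y hy)) hx' hx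

theorem Convex.norm_sub_sub_le_of_hasFDerivAt_prod_left (hs : Convex ℝ s) {x x' : F}
    (hf : ∀ v ∈ s, HasFDerivAt f (f' (v, x)) (v, x))
    (hf' : ∀ v ∈ s, HasFDerivAt f (f' (v, x')) (v, x'))
    (hC : ∀ v ∈ s, ‖f' (v, x) - f' (v, x')‖ ≤ C) {u₀ u₁ : E} (hu₀ : u₀ ∈ s) (hu₁ : u₁ ∈ s) :
    ‖f (u₁, x) - f (u₁, x') - (f (u₀, x) - f (u₀, x'))‖ ≤ C * ‖u₁ - u₀‖ := by
  refine hs.norm_image_sub_le_of_norm_hasFDerivWithin_le (f := fun v => f (v, x) - f (v, x'))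
    (f' := fun v => (f' (v, x)).comp (inl ℝ E F) - (f' (v, x')).comp (inl ℝ E F))
    (fun v hv => ?_) (fun v hv => ?_) hu₀ hu₁
  · exact (((hf v hv).comp v (hasFDerivAt_prodMk_left v x)).sub
      ((hf' v hv).comp v (hasFDerivAt_prodMk_left v x'))).hasFDerivWithinAt
  · rw [← sub_comp]
    exact (norm_comp_inl_le _).trans (hC v hv)

theorem Convex.norm_sub_sub_le_of_hasFDerivAt_prod_right (ht : Convex ℝ t) {u₀ u₁ : E}
    (hf₀ : ∀ y ∈ t, HasFDerivAt f (f' (u₀, y)) (u₀, y))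
    (hf₁ : ∀ y ∈ t, HasFDerivAt f (f' (u₁, y)) (u₁, y))
    (hC : ∀ y ∈ t, ‖f' (u₁, y) - f' (u₀, y)‖ ≤ C) {x x' : F} (hx : x ∈ t) (hx' : x' ∈ t) :
    ‖f (u₁, x) - f (u₀, x) - (f (u₁, x') - f (u₀, x'))‖ ≤ C * ‖x - x'‖ := by
  refine ht.norm_image_sub_le_of_norm_hasFDerivWithin_le (f := fun y => f (u₁, y) - f (u₀, y))
    (f' := fun y => (f' (u₁, y)).comp (inr ℝ E F) - (f' (u₀, y)).comp (inr ℝ E F))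
    (fun y hy => ?_) (fun y hy => ?_) hx' hx
  · exact (((hf₁ y hy).comp y (hasFDerivAt_prodMk_right u₁ y)).sub
      ((hf₀ y hy).comp y (hasFDerivAt_prodMk_right u₀ y))).hasFDerivWithinAt
  · rw [← sub_comp]
    exact (norm_comp_inr_le _).trans (hC y hy)

end PartialMeanValue

theorem parameter_extraction_C1_general
    {BU BV Z : Type*} [NormedAddCommGroup BU] [NormedSpace ℝ BU]
    [NormedAddCommGroup BV] [NormedSpace ℝ BV]
    [NormedAddCommGroup Z] [NormedSpace ℝ Z]
    (U : Set BU) (V : Set BV)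
    (hUconv : Convex ℝ U)
    (hVconv : Convex ℝ V)
    (s r δ₁ M H : ℝ) (hs1 : s ≤ 1) (hr2 : r ≤ 1 + s)
    (hδ1 : δ₁ ≤ 1) (hM : 0 ≤ M) (hH : 0 ≤ H)
    (φ : BU × BV → Z) (Dφ : BU × BV → (BU × BV) →L[ℝ] Z)
    (hder : ∀ p ∈ U ×ˢ V, HasFDerivAt φ (Dφ p) p)
    (hbound : ∀ p ∈ U ×ˢ V, ‖φ p‖ ≤ M ∧ ‖Dφ p‖ ≤ M)
    (hhold : ∀ p ∈ U ×ˢ V, ∀ q ∈ U ×ˢ V, ‖p - q‖ ≤ δ₁ →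
      ‖Dφ p - Dφ q‖ ≤ H * ‖p - q‖ ^ (r - 1)) :
    (∀ u ∈ U, ∀ x ∈ V, ∀ x' ∈ V, ‖x - x'‖ ≤ δ₁ →
        ‖φ (u, x) - φ (u, x')‖ ≤ M * ‖x - x'‖ ^ s) ∧
    (∀ u₀ ∈ U, ∀ u₁ ∈ U, ‖u₁ - u₀‖ ≤ δ₁ →
      (∀ x ∈ V, ‖φ (u₁, x) - φ (u₀, x)‖ ≤ (max M H) * ‖u₁ - u₀‖ ^ (r - s)) ∧
      (∀ x ∈ V, ∀ x' ∈ V, ‖x - x'‖ ≤ δ₁ →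
        ‖(φ (u₁, x) - φ (u₀, x)) - (φ (u₁, x') - φ (u₀, x'))‖ ≤
          H * ‖u₁ - u₀‖ ^ (r - s) * ‖x - x'‖ ^ s)) := by
  have hφ : ∀ u ∈ U, ∀ y ∈ V, HasFDerivAt φ (Dφ (u, y)) (u, y) :=
    fun u hu y hy => hder _ ⟨hu, hy⟩
  have hDφ : ∀ u ∈ U, ∀ y ∈ V, ‖Dφ (u, y)‖ ≤ M :=
    fun u hu y hy => (hbound _ ⟨hu, hy⟩).2
  refine ⟨fun u hu x hx x' hx' hxx' => ?_,
    fun u₀ hu₀ u₁ hu₁ hu => ⟨fun x hx => ?_, fun x hx x' hx' hxx' => ?_⟩⟩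
  · calc ‖φ (u, x) - φ (u, x')‖ ≤ M * ‖x - x'‖ :=
          hVconv.norm_sub_le_of_hasFDerivAt_prod_right (hφ u hu) (hDφ u hu) hx hx'
      _ ≤ M * ‖x - x'‖ ^ s := by
          gcongr
          exact Real.self_le_rpow_of_le_one (norm_nonneg _) (hxx'.trans hδ1) hs1
  · calc ‖φ (u₁, x) - φ (u₀, x)‖ ≤ M * ‖u₁ - u₀‖ :=
          hUconv.norm_sub_le_of_hasFDerivAt_prod_left (fun v hv => hφ v hv x hx)
            (fun v hv => hDφ v hv x hx) hu₀ hu₁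
      _ ≤ max M H * ‖u₁ - u₀‖ ^ (r - s) := by
          gcongr
          · exact le_max_left M H
          · exact Real.self_le_rpow_of_le_one (norm_nonneg _) (hu.trans hδ1) (by linarith)
  · have hx_diff := hVconv.norm_sub_sub_le_of_hasFDerivAt_prod_right (hφ u₀ hu₀) (hφ u₁ hu₁)
      (fun y hy => by
        simpa using hhold (u₁, y) ⟨hu₁, hy⟩ (u₀, y) ⟨hu₀, hy⟩ (by simpa using hu)) hx hx'
    have hu_diff := hUconv.norm_sub_sub_le_of_hasFDerivAt_prod_left
      (fun v hv => hφ v hv x hx) (fun v hv => hφ v hv x' hx')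
      (fun v hv => by
        simpa using hhold (v, x) ⟨hv, hx⟩ (v, x') ⟨hv, hx'⟩ (by simpa using hxx')) hu₀ hu₁
    rw [sub_sub_sub_comm] at hu_diff
    calc _ ≤ H * min (‖u₁ - u₀‖ ^ (r - 1) * ‖x - x'‖)
            (‖x - x'‖ ^ (r - 1) * ‖u₁ - u₀‖) := by
          rw [mul_min_of_nonneg _ _ hH, ← mul_assoc, ← mul_assoc]
          exact le_min hx_diff hu_diff
      _ ≤ H * (‖u₁ - u₀‖ ^ (r - s) * ‖x - x'‖ ^ s) := by
          gcongr
          exact Real.min_rpow_sub_one_mul_le (norm_nonneg _) (norm_nonneg _) hs1 hr2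
      _ = H * ‖u₁ - u₀‖ ^ (r - s) * ‖x - x'‖ ^ s := (mul_assoc _ _ _).symm

/-- Parameter extraction, C¹⁺-case (Case 2 of Theorem `lemma:injection`):
for `0 ≤ s ≤ 1 < r ≤ 1 + s`, a `C^{(1,r-1)}` function `φ` on `U × V` (max norm on
the product, locality scale `δ₁ ∈ (0,1]`) gives partial maps `φ(u,·)` in the
s-Hölder space, and `u ↦ φ(u,·)` is (r-s)-Hölder into that space with Hölder
constant at most `‖φ‖_r`; in particular for `Δ = φ(u₁,·) - φ(u₀,·)` one has
`h^s(Δ) ≤ h^{r-1}_{δ₁}(Dφ)·|u₁-u₀|^{r-s}`. -/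
theorem parameter_extraction_C1
    {BU BV Z : Type*} [NormedAddCommGroup BU] [NormedSpace ℝ BU]
    [NormedAddCommGroup BV] [NormedSpace ℝ BV]
    [NormedAddCommGroup Z] [NormedSpace ℝ Z]
    (U : Set BU) (V : Set BV)
    (hUopen : IsOpen U) (hUconv : Convex ℝ U)
    (hVopen : IsOpen V) (hVconv : Convex ℝ V)
    (s r δ₁ M H : ℝ) (hs0 : 0 ≤ s) (hs1 : s ≤ 1) (hr1 : 1 < r) (hr2 : r ≤ 1 + s)
    (hδ0 : 0 < δ₁) (hδ1 : δ₁ ≤ 1) (hM : 0 ≤ M) (hH : 0 ≤ H)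
    (φ : BU × BV → Z) (Dφ : BU × BV → (BU × BV) →L[ℝ] Z)
    (hder : ∀ p ∈ U ×ˢ V, HasFDerivAt φ (Dφ p) p)
    (hbound : ∀ p ∈ U ×ˢ V, ‖φ p‖ ≤ M ∧ ‖Dφ p‖ ≤ M)
    (hhold : ∀ p ∈ U ×ˢ V, ∀ q ∈ U ×ˢ V, ‖p - q‖ ≤ δ₁ →
      ‖Dφ p - Dφ q‖ ≤ H * ‖p - q‖ ^ (r - 1)) :
    (∀ u ∈ U, ∀ x ∈ V, ∀ x' ∈ V, ‖x - x'‖ ≤ δ₁ →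
        ‖φ (u, x) - φ (u, x')‖ ≤ M * ‖x - x'‖ ^ s) ∧
    (∀ u₀ ∈ U, ∀ u₁ ∈ U, ‖u₁ - u₀‖ ≤ δ₁ →
      (∀ x ∈ V, ‖φ (u₁, x) - φ (u₀, x)‖ ≤ (max M H) * ‖u₁ - u₀‖ ^ (r - s)) ∧
      (∀ x ∈ V, ∀ x' ∈ V, ‖x - x'‖ ≤ δ₁ →
        ‖(φ (u₁, x) - φ (u₀, x)) - (φ (u₁, x') - φ (u₀, x'))‖ ≤
          H * ‖u₁ - u₀‖ ^ (r - s) * ‖x - x'‖ ^ s)) :=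
  parameter_extraction_C1_general U V hUconv hVconv s r δ₁ M H hs1 hr2 hδ1 hM hH φ Dφ hder hbound
    hhold
end

section
/- Let φ : V → Z be bounded and δ₁-locally α-Hölder on an open convex subset V of a Banach space (α ∈ (0,1]), and let ψ : U → V be K-Lipschitz on an open convex subset U of a Banach space, with K ≥ 1. Then φ ∘ ψ is bounded and δ₁-locally α-Hölder on U with h^α_{δ₁}(φ ∘ ψ) ≤ ⌈K⌉^{1−α}·K^α·h^α_{δ₁}(φ) ≤ ⌈K⌉·h^α_{δ₁}(φ). -/
open Real Metric Set

/-!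
Split the segment from `x` to `x'` into `n = ⌈K⌉` equal pieces. Each piece has length
`‖x - x'‖ / n`, so its `ψ`-image has length at most `K ‖x - x'‖ / n ≤ ‖x - x'‖ ≤ δ₁`, and the local
Hölder bound for `φ` applies to it. Summing the `n` pieces gives
`n · H (K ‖x - x'‖ / n)^α = n^{1-α} K^α H ‖x - x'‖^α`.
-/

theorem Convex.dist_le_mul_of_forall_dist_le_div {E F : Type*} [NormedAddCommGroup E]
    [NormedSpace ℝ E] [PseudoMetricSpace F] {U : Set E} (hU : Convex ℝ U) {f : E → F}
    {x y : E} (hx : x ∈ U) (hy : y ∈ U) {n : ℕ} (hn : n ≠ 0) {C : ℝ}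
    (hf : ∀ a ∈ U, ∀ b ∈ U, dist a b ≤ dist x y / n → dist (f a) (f b) ≤ C) :
    dist (f x) (f y) ≤ n * C := by
  have hn' : (0 : ℝ) < n := Nat.cast_pos.mpr (Nat.pos_of_ne_zero hn)
  set p : ℕ → E := fun i => AffineMap.lineMap x y ((i : ℝ) / n) with hp
  have hp_mem : ∀ i ≤ n, p i ∈ U := fun i hi =>
    hU.lineMap_mem hx hy ⟨by positivity, div_le_one_of_le₀ (by exact_mod_cast hi) hn'.le⟩
  have hp_step : ∀ i, dist (p i) (p (i + 1)) = dist x y / n := by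
    intro i
    rw [hp, dist_lineMap_lineMap, Real.dist_eq, Nat.cast_succ, add_div, sub_add_cancel_left,
      abs_neg, abs_of_pos (by positivity), one_div_mul_eq_div]
  calc dist (f x) (f y) = dist (f (p 0)) (f (p n)) := by
        simp only [hp, Nat.cast_zero, zero_div, AffineMap.lineMap_apply_zero, div_self hn'.ne',
          AffineMap.lineMap_apply_one]
    _ ≤ ∑ _i ∈ Finset.range n, C := dist_le_range_sum_of_dist_le n fun hi =>
        hf _ (hp_mem _ hi.le) _ (hp_mem _ hi) (hp_step _).le
    _ = n * C := by rw [Finset.sum_const, Finset.card_range, nsmul_eq_mul]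

theorem Real.mul_mul_rpow_div_eq {n K d α : ℝ} (hn : 0 < n) (hK : 0 ≤ K) (hd : 0 ≤ d) (H : ℝ) :
    n * (H * (K * (d / n)) ^ α) = n ^ (1 - α) * K ^ α * H * d ^ α := by
  rw [Real.mul_rpow hK (by positivity), Real.div_rpow hd hn.le, Real.rpow_sub hn, Real.rpow_one]
  field_simp

theorem Real.rpow_one_sub_mul_rpow_le {n K α : ℝ} (hn : 0 < n) (hK : 0 ≤ K) (hKn : K ≤ n)
    (hα : 0 ≤ α) : n ^ (1 - α) * K ^ α ≤ n :=
  calc n ^ (1 - α) * K ^ α ≤ n ^ (1 - α) * n ^ α := by gcongr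
    _ = n := by rw [← Real.rpow_add hn, sub_add_cancel, Real.rpow_one]

theorem norm_comp_sub_le_of_norm_sub_le {X Y Z : Type*} [SeminormedAddCommGroup X]
    [SeminormedAddCommGroup Y] [SeminormedAddCommGroup Z] {U : Set X} {V : Set Y}
    {φ : Y → Z} {ψ : X → Y} {α δ₁ K H s : ℝ} (hα : 0 ≤ α) (hH : 0 ≤ H) (hK : 0 ≤ K)
    (hmaps : MapsTo ψ U V)
    (hφh : ∀ y ∈ V, ∀ y' ∈ V, ‖y - y'‖ ≤ δ₁ → ‖φ y - φ y'‖ ≤ H * ‖y - y'‖ ^ α)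
    (hψ : ∀ x ∈ U, ∀ x' ∈ U, ‖ψ x - ψ x'‖ ≤ K * ‖x - x'‖)
    {a b : X} (ha : a ∈ U) (hb : b ∈ U) (hab : ‖a - b‖ ≤ s) (hs : K * s ≤ δ₁) :
    ‖φ (ψ a) - φ (ψ b)‖ ≤ H * (K * s) ^ α := by
  have hψab : ‖ψ a - ψ b‖ ≤ K * s := (hψ a ha b hb).trans (by gcongr)
  calc ‖φ (ψ a) - φ (ψ b)‖ ≤ H * ‖ψ a - ψ b‖ ^ α :=
        hφh _ (hmaps ha) _ (hmaps hb) (hψab.trans hs)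
    _ ≤ H * (K * s) ^ α := by gcongr

theorem holder_comp_lipschitz_general
    {X Y Z : Type*} [NormedAddCommGroup X] [NormedSpace ℝ X]
    [NormedAddCommGroup Y] [NormedSpace ℝ Y] [NormedAddCommGroup Z]
    (U : Set X) (V : Set Y) (hUconv : Convex ℝ U)
    (α δ₁ K M H : ℝ) (hα0 : 0 < α)
    (hK : 1 ≤ K) (hH : 0 ≤ H)
    (φ : Y → Z) (ψ : X → Y)
    (hmaps : Set.MapsTo ψ U V)
    (hφb : ∀ y ∈ V, ‖φ y‖ ≤ M)
    (hφh : ∀ y ∈ V, ∀ y' ∈ V, ‖y - y'‖ ≤ δ₁ → ‖φ y - φ y'‖ ≤ H * ‖y - y'‖ ^ α)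
    (hψ : ∀ x ∈ U, ∀ x' ∈ U, ‖ψ x - ψ x'‖ ≤ K * ‖x - x'‖) :
    (∀ x ∈ U, ‖φ (ψ x)‖ ≤ M) ∧
    (∀ x ∈ U, ∀ x' ∈ U, ‖x - x'‖ ≤ δ₁ →
      ‖φ (ψ x) - φ (ψ x')‖ ≤ (⌈K⌉₊ : ℝ) ^ (1 - α) * K ^ α * H * ‖x - x'‖ ^ α) ∧
    (⌈K⌉₊ : ℝ) ^ (1 - α) * K ^ α * H ≤ (⌈K⌉₊ : ℝ) * H := by
  have hK0 : 0 ≤ K := zero_le_one.trans hK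
  have hn_ne : ⌈K⌉₊ ≠ 0 := (Nat.ceil_pos.mpr (zero_lt_one.trans_le hK)).ne'
  have hn : (0 : ℝ) < ⌈K⌉₊ := Nat.cast_pos.mpr (Nat.pos_of_ne_zero hn_ne)
  have hKn : K ≤ ⌈K⌉₊ := Nat.le_ceil K
  refine ⟨fun x hx => hφb _ (hmaps hx), fun x hx x' hx' hxx' => ?_,
    mul_le_mul_of_nonneg_right (Real.rpow_one_sub_mul_rpow_le hn hK0 hKn hα0.le) hH⟩
  have hstep : K * (‖x - x'‖ / ⌈K⌉₊) ≤ δ₁ :=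
    calc K * (‖x - x'‖ / ⌈K⌉₊) ≤ ‖x - x'‖ := by
          rw [mul_div_left_comm]
          exact mul_le_of_le_one_right (norm_nonneg _) ((div_le_one hn).mpr hKn)
      _ ≤ δ₁ := hxx'
  have hsum := hUconv.dist_le_mul_of_forall_dist_le_div hx hx' hn_ne fun a ha b hb hab =>
    (dist_eq_norm _ _).trans_le <| norm_comp_sub_le_of_norm_sub_le hα0.le hH hK0 hmaps hφh hψ
      ha hb (by simpa only [dist_eq_norm] using hab) hstep
  rwa [dist_eq_norm, Real.mul_mul_rpow_div_eq hn hK0 (norm_nonneg _)] at hsum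

/-- Composition of a δ₁-locally α-Hölder map with a K-Lipschitz map (K ≥ 1):
the composite is bounded and δ₁-locally α-Hölder with Hölder constant at most
`⌈K⌉^{1-α}·K^α·H ≤ ⌈K⌉·H`. -/
theorem holder_comp_lipschitz
    {X Y Z : Type*} [NormedAddCommGroup X] [NormedSpace ℝ X]
    [NormedAddCommGroup Y] [NormedSpace ℝ Y] [NormedAddCommGroup Z]
    (U : Set X) (V : Set Y) (hUopen : IsOpen U) (hUconv : Convex ℝ U)
    (hVopen : IsOpen V)
    (α δ₁ K M H : ℝ) (hα0 : 0 < α) (hα1 : α ≤ 1) (hδ : 0 < δ₁)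
    (hK : 1 ≤ K) (hH : 0 ≤ H)
    (φ : Y → Z) (ψ : X → Y)
    (hmaps : Set.MapsTo ψ U V)
    (hφb : ∀ y ∈ V, ‖φ y‖ ≤ M)
    (hφh : ∀ y ∈ V, ∀ y' ∈ V, ‖y - y'‖ ≤ δ₁ → ‖φ y - φ y'‖ ≤ H * ‖y - y'‖ ^ α)
    (hψ : ∀ x ∈ U, ∀ x' ∈ U, ‖ψ x - ψ x'‖ ≤ K * ‖x - x'‖) :
    (∀ x ∈ U, ‖φ (ψ x)‖ ≤ M) ∧
    (∀ x ∈ U, ∀ x' ∈ U, ‖x - x'‖ ≤ δ₁ →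
      ‖φ (ψ x) - φ (ψ x')‖ ≤ (⌈K⌉₊ : ℝ) ^ (1 - α) * K ^ α * H * ‖x - x'‖ ^ α) ∧
    (⌈K⌉₊ : ℝ) ^ (1 - α) * K ^ α * H ≤ (⌈K⌉₊ : ℝ) * H :=
  holder_comp_lipschitz_general U V hUconv α δ₁ K M H hα0 hK hH φ ψ hmaps hφb hφh hψ
end

section
/- Let X be a Banach space, U an open convex subset of a Banach space B, and suppose f : U → X satisfies the fixed point equation f(u) = π_u(f(u)) where: (i) for each u, z ↦ π_u(φ + z) is Fréchet differentiable at z = 0 with derivative Q_u satisfying ‖π_u(φ+z) − π_u(φ) − Q_u z‖ ≤ C‖z‖² for ‖z‖ small; (ii) 1 − Q_u is invertible with uniformly bounded inverse; (iii) u ↦ π_u(φ) is differentiable with derivative P_u(φ) and error O(|h|^{1+α}) for some α > 0; (iv) f is Lipschitz and u ↦ Q_u is α-Hölder (in the sense that ‖(Q_{u+h} − Q_u)z‖ = O(|h|^α‖z‖) along the relevant increments). Then f is differentiable with D_u f(u) = (1 − Q_u)^{−1} P_u(f(u)). -/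
/-!
Put `Δ = f (u + h) - f u`. Expanding `pr (u + h)` to first order around its fixed point
`f (u + h)` and comparing with the expansion of `pr (u + h) (f u)` in the parameter gives
`(1 - Q u) Δ - P u h` as the sum of three remainders: `O(‖Δ‖²)`, `O(‖h‖^{1+α})` and
`(Q (u + h) - Q u) Δ = O(‖h‖^α ‖Δ‖)`. Since `f` is Lipschitz, `Δ = O(h)`, so all three are
`o(h)`, and applying the inverse of `1 - Q u` yields the derivative.
-/

open Metric Filter Topology Asymptotics

section Remainders

variable {ι E F G : Type*} [NormedAddCommGroup E] [NormedAddCommGroup F] [NormedAddCommGroup G]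
  {l : Filter ι}

theorem isLittleO_of_norm_le_mul {a : ι → ℝ} {r : ι → F} {Δ : ι → E} {g : ι → G}
    (ha : Tendsto a l (𝓝 0)) (hΔ : Δ =O[l] g) (hr : ∀ᶠ x in l, ‖r x‖ ≤ a x * ‖Δ x‖) :
    r =o[l] g := by
  have hprod : (fun x => a x * ‖Δ x‖) =o[l] fun x => (1 : ℝ) * ‖g x‖ :=
    ((isLittleO_one_iff ℝ).2 ha).mul_isBigO hΔ.norm_norm
  refine (IsBigO.of_bound 1 ?_).trans_isLittleO (hprod.trans_isBigO ?_)
  · filter_upwards [hr] with x hx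
    rw [one_mul, Real.norm_eq_abs]
    exact hx.trans (le_abs_self _)
  · simpa using (isBigO_refl g l).norm_left

theorem isLittleO_of_norm_le_sq {C : ℝ} {r : ι → F} {Δ : ι → E} {g : ι → G}
    (hΔ : Δ =O[l] g) (hΔ0 : Tendsto Δ l (𝓝 0)) (hr : ∀ᶠ x in l, ‖r x‖ ≤ C * ‖Δ x‖ ^ 2) :
    r =o[l] g :=
  isLittleO_of_norm_le_mul (by simpa using hΔ0.norm.const_mul C) hΔ <|
    hr.mono fun x hx => by rwa [sq, ← mul_assoc] at hx

theorem tendsto_const_mul_norm_rpow_nhds_zero {α : ℝ} (hα : 0 < α) (C : ℝ) :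
    Tendsto (fun h : E => C * ‖h‖ ^ α) (𝓝 0) (𝓝 0) := by
  have hrpow : Tendsto (fun h : E => ‖h‖ ^ α) (𝓝 0) (𝓝 0) := by
    simpa [Real.zero_rpow hα.ne', Function.comp_def] using
      (Real.continuousAt_rpow_const 0 α (Or.inr hα.le)).tendsto.comp (tendsto_norm_zero (E := E))
  simpa using hrpow.const_mul C

theorem isLittleO_of_norm_le_rpow_one_add {α C : ℝ} (hα : 0 < α) {r : E → F}
    (hr : ∀ᶠ h in 𝓝 0, ‖r h‖ ≤ C * ‖h‖ ^ (1 + α)) : r =o[𝓝 0] fun h => h :=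
  isLittleO_of_norm_le_mul (tendsto_const_mul_norm_rpow_nhds_zero hα C) (isBigO_refl _ _) <|
    hr.mono fun h hh => by
      rwa [Real.rpow_add' (norm_nonneg h) (by positivity), Real.rpow_one, mul_comm ‖h‖,
        ← mul_assoc] at hh

theorem isLittleO_apply_of_norm_le_rpow {𝕜 G' : Type*} [NontriviallyNormedField 𝕜]
    [NormedSpace 𝕜 F] [NormedSpace 𝕜 G] [NormedAddCommGroup G'] {α C : ℝ} (hα : 0 < α) {T : E → F →L[𝕜] G}
    {Δ : E → F} {g : E → G'} (hT : ∀ᶠ h in 𝓝 0, ‖T h‖ ≤ C * ‖h‖ ^ α) (hΔ : Δ =O[𝓝 0] g) :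
    (fun h => T h (Δ h)) =o[𝓝 0] g :=
  isLittleO_of_norm_le_mul (tendsto_const_mul_norm_rpow_nhds_zero hα C) hΔ <|
    hT.mono fun h hh => (T h).le_of_opNorm_le hh (Δ h)

end Remainders

theorem hasFDerivAt_of_isLittleO_of_leftInverse {𝕜 E F G : Type*} [NontriviallyNormedField 𝕜]
    [NormedAddCommGroup E] [NormedSpace 𝕜 E] [NormedAddCommGroup F] [NormedSpace 𝕜 F]
    [NormedAddCommGroup G] [NormedSpace 𝕜 G] {f : E → F} {x : E} {P : E →L[𝕜] G}
    {L : F →L[𝕜] G} {R : G →L[𝕜] F} (hRL : R.comp L = ContinuousLinearMap.id 𝕜 F)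
    (h : (fun h => L (f (x + h) - f x) - P h) =o[𝓝 0] fun h => h) :
    HasFDerivAt f (R.comp P) x := by
  rw [hasFDerivAt_iff_isLittleO_nhds_zero]
  refine ((R.isBigO_comp _ _).trans_isLittleO h).congr_left fun h => ?_
  rw [map_sub, ← ContinuousLinearMap.comp_apply R L, hRL]
  rfl

theorem fixed_point_differentiable_general
    {B X : Type*} [NormedAddCommGroup B] [NormedSpace ℝ B]
    [NormedAddCommGroup X] [NormedSpace ℝ X]
    (U : Set B) (hUopen : IsOpen U)
    (pr : B → X → X) (f : B → X) (Q : B → X →L[ℝ] X) (P : B → B →L[ℝ] X)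
    (α : ℝ) (hα : 0 < α)
    (hfix : ∀ u ∈ U, pr u (f u) = f u)
    (hQ : ∃ C ε : ℝ, 0 < ε ∧ ∀ u ∈ U, ∀ z : X, ‖z‖ ≤ ε →
      ‖pr u (f u + z) - pr u (f u) - Q u z‖ ≤ C * ‖z‖ ^ 2)
    (hP : ∃ C : ℝ, ∀ u ∈ U, ∀ h : B, u + h ∈ U →
      ‖pr (u + h) (f u) - pr u (f u) - P u h‖ ≤ C * ‖h‖ ^ (1 + α))
    (hLip : ∃ C : ℝ, ∀ u ∈ U, ∀ v ∈ U, ‖f u - f v‖ ≤ C * ‖u - v‖)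
    (hQHol : ∃ C : ℝ, ∀ u ∈ U, ∀ h : B, u + h ∈ U →
      ‖Q (u + h) - Q u‖ ≤ C * ‖h‖ ^ α) :
    ∀ u ∈ U, ∀ R : X →L[ℝ] X,
      (1 - Q u) * R = 1 → R * (1 - Q u) = 1 →
      HasFDerivAt f (R.comp (P u)) u := by
  obtain ⟨C₁, ε, hε, hQ⟩ := hQ
  obtain ⟨C₂, hP⟩ := hP
  obtain ⟨C₃, hLip⟩ := hLip
  obtain ⟨C₄, hQHol⟩ := hQHol
  intro u hu R _ hRQ
  have hU : ∀ᶠ h in 𝓝 (0 : B), u + h ∈ U := by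
    have hcont : Tendsto (u + ·) (𝓝 (0 : B)) (𝓝 u) := by
      simpa using (continuous_const_add u).tendsto 0
    exact hcont.eventually (hUopen.mem_nhds hu)
  set Δ : B → X := fun h => f (u + h) - f u
  have hΔ : Δ =O[𝓝 0] fun h => h :=
    IsBigO.of_bound C₃ (hU.mono fun h hh => by simpa [Δ] using hLip _ hh u hu)
  have hΔ0 : Tendsto Δ (𝓝 0) (𝓝 0) := hΔ.trans_tendsto tendsto_id
  have hquad : (fun h => pr (u + h) (f u) - f (u + h) + Q (u + h) (Δ h)) =o[𝓝 0] fun h => h := by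
    refine isLittleO_of_norm_le_sq (C := C₁) hΔ hΔ0 ?_
    filter_upwards [hU, hΔ0.eventually (closedBall_mem_nhds 0 hε)] with h hh hsmall
    have hbase : f (u + h) + -Δ h = f u := by simp [Δ]
    have hexp := hQ (u + h) hh (-Δ h) (by simpa using hsmall)
    rwa [hbase, hfix _ hh, map_neg, sub_neg_eq_add, norm_neg] at hexp
  have hparam : (fun h => pr (u + h) (f u) - f u - P u h) =o[𝓝 0] fun h => h :=
    isLittleO_of_norm_le_rpow_one_add hα <|
      hU.mono fun h hh => by simpa [hfix u hu] using hP u hu h hh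
  have hhol : (fun h => (Q (u + h) - Q u) (Δ h)) =o[𝓝 0] fun h => h :=
    isLittleO_apply_of_norm_le_rpow hα (hU.mono fun h hh => hQHol u hu h hh) hΔ
  refine hasFDerivAt_of_isLittleO_of_leftInverse hRQ <|
    ((hquad.neg_left.add hparam).add hhol).congr_left fun h => ?_
  simp only [Δ, sub_apply, one_apply_eq_self]
  abel

/-- Abstract bootstrap differentiability of a parametrized fixed point
(Theorem `sedro thm`): under quadratic expansion of `π_u` at the fixed point
with derivative `Q_u`, invertibility of `1 - Q_u` with uniformly bounded
inverse, differentiability in the parameter with Hölder error, Lipschitz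
continuity of the fixed point and α-Hölder continuity of `u ↦ Q_u`, the fixed
point map `f` is differentiable with `D_u f(u) = (1 - Q_u)⁻¹ P_u(f(u))`. -/
theorem fixed_point_differentiable
    {B X : Type*} [NormedAddCommGroup B] [NormedSpace ℝ B]
    [NormedAddCommGroup X] [NormedSpace ℝ X] [CompleteSpace X]
    (U : Set B) (hUopen : IsOpen U) (hUconv : Convex ℝ U)
    (pr : B → X → X) (f : B → X) (Q : B → X →L[ℝ] X) (P : B → B →L[ℝ] X)
    (α : ℝ) (hα : 0 < α)
    (hfix : ∀ u ∈ U, pr u (f u) = f u)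
    (hQ : ∃ C ε : ℝ, 0 < ε ∧ ∀ u ∈ U, ∀ z : X, ‖z‖ ≤ ε →
      ‖pr u (f u + z) - pr u (f u) - Q u z‖ ≤ C * ‖z‖ ^ 2)
    (hinv : ∃ Cinv : ℝ, ∀ u ∈ U, ∃ R : X →L[ℝ] X,
      (1 - Q u) * R = 1 ∧ R * (1 - Q u) = 1 ∧ ‖R‖ ≤ Cinv)
    (hP : ∃ C : ℝ, ∀ u ∈ U, ∀ h : B, u + h ∈ U →
      ‖pr (u + h) (f u) - pr u (f u) - P u h‖ ≤ C * ‖h‖ ^ (1 + α))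
    (hLip : ∃ C : ℝ, ∀ u ∈ U, ∀ v ∈ U, ‖f u - f v‖ ≤ C * ‖u - v‖)
    (hQHol : ∃ C : ℝ, ∀ u ∈ U, ∀ h : B, u + h ∈ U →
      ‖Q (u + h) - Q u‖ ≤ C * ‖h‖ ^ α) :
    ∀ u ∈ U, ∀ R : X →L[ℝ] X,
      (1 - Q u) * R = 1 → R * (1 - Q u) = 1 →
      HasFDerivAt f (R.comp (P u)) u :=
  fixed_point_differentiable_general U hUopen pr f Q P α hα hfix hQ hP hLip hQHol
end
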